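/- Let g(z, w) be an arbitrary formal power series in two variables over ℂ, and let (α_n)_{n≥1} and (β_n)_{n≥1} be sequences of real numbers. Then there exists a unique pair of real formal power series f(z, w), φ(z, w) such that: f = z + w + (terms of total degree ≥ 2); φ consists only of terms of total degree ≥ 2; φ has no harmonic terms, i.e. the coefficients of z^k and of w^k in φ vanish for all k; for every n ≥ 1 the coefficient of (zw)^n in f equals α_n and the coefficient of (zw)^n in φ equals β_n; and D²f − 2·(Dφ)·(Df) = g. -/

import Mathlib

/-- Formal partial differentiation with respect to the first variable `z`. -/
noncomputable def Dz (g : MvPowerSeries (Fin 2) ℂ) : MvPowerSeries (Fin 2) ℂ :=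
  fun d => ((d 0 : ℕ) + 1 : ℂ) * MvPowerSeries.coeff (R := ℂ) (d + Finsupp.single 0 1) g

/-- A two-variable series is *real* if `a_{jk} = conj a_{kj}` for all `j, k`. -/
def IsRealSeries (f : MvPowerSeries (Fin 2) ℂ) : Prop :=
  ∀ j k : ℕ,
    MvPowerSeries.coeff (R := ℂ) (Finsupp.single 0 j + Finsupp.single 1 k) f =
      starRingEnd ℂ
        (MvPowerSeries.coeff (R := ℂ) (Finsupp.single 0 k + Finsupp.single 1 j) f)

open Finset

noncomputable section

namespace Stmt5

/-! ### Coefficient extraction infrastructure -/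

def sgl (j k : ℕ) : Fin 2 →₀ ℕ := Finsupp.single 0 j + Finsupp.single 1 k

lemma sgl_apply0 (j k : ℕ) : sgl j k 0 = j := by simp [sgl]
lemma sgl_apply1 (j k : ℕ) : sgl j k 1 = k := by simp [sgl]

lemma eq_sgl (d : Fin 2 →₀ ℕ) : d = sgl (d 0) (d 1) := by
  ext i; fin_cases i <;> simp [sgl]

lemma sgl_add_single (j k : ℕ) : sgl j k + Finsupp.single 0 1 = sgl (j+1) k := by
  ext i; fin_cases i <;> simp [sgl]

lemma sgl00 : sgl 0 0 = 0 := by simp [sgl]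
lemma sgl_right (k : ℕ) : sgl 0 k = Finsupp.single 1 k := by simp [sgl]
lemma sgl_left (k : ℕ) : sgl k 0 = Finsupp.single 0 k := by simp [sgl]

def cf (F : MvPowerSeries (Fin 2) ℂ) (j k : ℕ) : ℂ := MvPowerSeries.coeff (R := ℂ) (sgl j k) F

lemma cf_apply (F : MvPowerSeries (Fin 2) ℂ) (j k : ℕ) : cf F j k = F (sgl j k) := rfl

lemma cf_ext {F G : MvPowerSeries (Fin 2) ℂ} (h : ∀ j k, cf F j k = cf G j k) : F = G := by
  funext d
  have := h (d 0) (d 1)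
  rw [cf_apply, cf_apply] at this
  rwa [eq_sgl d]

lemma cf_Dz (F : MvPowerSeries (Fin 2) ℂ) (j k : ℕ) :
    cf (Dz F) j k = ((j:ℂ)+1) * cf F (j+1) k := by
  show ((sgl j k 0 : ℕ) + 1 : ℂ) * MvPowerSeries.coeff (R := ℂ) (sgl j k + Finsupp.single 0 1) F = _
  rw [sgl_apply0, sgl_add_single]
  rfl

lemma cf_sub (F G : MvPowerSeries (Fin 2) ℂ) (j k : ℕ) :
    cf (F - G) j k = cf F j k - cf G j k := by simp [cf]

lemma cf_two_mul (F : MvPowerSeries (Fin 2) ℂ) (j k : ℕ) : cf (2 * F) j k = 2 * cf F j k := by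
  unfold cf
  rw [show (2:MvPowerSeries (Fin 2) ℂ) = MvPowerSeries.C (σ := Fin 2) (R := ℂ) 2 from
    (map_ofNat (MvPowerSeries.C (σ := Fin 2) (R := ℂ)) 2).symm, MvPowerSeries.coeff_C_mul]

lemma cf_mul (F G : MvPowerSeries (Fin 2) ℂ) (j k : ℕ) :
    cf (F * G) j k = ∑ x ∈ antidiagonal j ×ˢ antidiagonal k,
      cf F x.1.1 x.2.1 * cf G x.1.2 x.2.2 := by
  unfold cf
  rw [MvPowerSeries.coeff_mul]
  refine Finset.sum_nbij' (fun uv => ((uv.1 0, uv.2 0), (uv.1 1, uv.2 1)))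
    (fun x => (sgl x.1.1 x.2.1, sgl x.1.2 x.2.2)) ?_ ?_ ?_ ?_ ?_
  · rintro ⟨u, v⟩ h
    rw [Finset.HasAntidiagonal.mem_antidiagonal] at h
    simp only [Finset.mem_product, Finset.HasAntidiagonal.mem_antidiagonal]
    constructor
    · have := congrArg (fun d => d 0) h; simpa [sgl] using this
    · have := congrArg (fun d => d 1) h; simpa [sgl] using this
  · rintro ⟨⟨j1, j2⟩, ⟨k1, k2⟩⟩ h
    simp only [Finset.mem_product, Finset.HasAntidiagonal.mem_antidiagonal] at h
    rw [Finset.HasAntidiagonal.mem_antidiagonal]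
    ext i; fin_cases i <;> simp [sgl, h.1, h.2]
  · rintro ⟨u, v⟩ h
    simp only [Prod.mk.injEq]
    exact ⟨(eq_sgl u).symm, (eq_sgl v).symm⟩
  · rintro ⟨⟨j1, j2⟩, ⟨k1, k2⟩⟩ h
    simp [sgl_apply0, sgl_apply1]
  · rintro ⟨u, v⟩ h
    simp only
    rw [← eq_sgl u, ← eq_sgl v]

/-! ### The termination measure -/

def gap (p q : ℕ) : ℕ := (p - q) + (q - p)

def meas (t : Bool) (p q : ℕ) : ℕ :=
  8*(p+q+cond t 1 0)*(p+q+cond t 1 0) + 4*(gap p q) + 2*(cond t 1 0) + (if p < q then 1 else 0)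

lemma meas_ge (t : Bool) (p q : ℕ) : 8*(p+q+cond t 1 0)*(p+q+cond t 1 0) ≤ meas t p q := by
  unfold meas
  generalize 8*(p+q+cond t 1 0)*(p+q+cond t 1 0) = M
  omega

lemma meas_lt_sq {t : Bool} {p q s : ℕ} (h : p + q + cond t 1 0 < s) : meas t p q < 8*s*s := by
  have hg : gap p q ≤ p + q := by unfold gap; omega
  have hb : (cond t 1 0 : ℕ) ≤ 1 := by cases t <;> simp
  have hf : (if p < q then 1 else 0) ≤ 1 := by split <;> omega
  have key : meas t p q ≤ 8*(p+q+cond t 1 0)*(p+q+cond t 1 0) + 4*(p+q+cond t 1 0) + 3 := by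
    unfold meas
    generalize 8*(p+q+cond t 1 0)*(p+q+cond t 1 0) = M
    omega
  have h2 : 8*(p+q+cond t 1 0)*(p+q+cond t 1 0) + 4*(p+q+cond t 1 0) + 3 < 8*s*s := by
    set u := p + q + cond t 1 0 with hu
    nlinarith
  omega

lemma meas_lt_same_stage {t1 t2 : Bool} {p1 q1 p2 q2 : ℕ}
    (hstage : p1+q1+cond t1 1 0 = p2+q2+cond t2 1 0)
    (hsecond : 4*gap p1 q1 + 2*cond t1 1 0 + (if p1<q1 then 1 else 0)
      < 4*gap p2 q2 + 2*cond t2 1 0 + (if p2<q2 then 1 else 0)) :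
    meas t1 p1 q1 < meas t2 p2 q2 := by
  unfold meas
  rw [hstage]
  generalize 8*(p2+q2+cond t2 1 0)*(p2+q2+cond t2 1 0) = M
  omega

def SetR (j k : ℕ) : Finset ((ℕ×ℕ)×(ℕ×ℕ)) :=
  ((antidiagonal j) ×ˢ (antidiagonal k)).erase ((j,0),(k,0))

lemma mem_SetR {j k : ℕ} {x : (ℕ×ℕ)×(ℕ×ℕ)} (h : x ∈ SetR j k) :
    x.1.1 + x.1.2 = j ∧ x.2.1 + x.2.2 = k ∧ ¬(x.1.1 = j ∧ x.2.1 = k) := by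
  obtain ⟨⟨a,b⟩,⟨c,d⟩⟩ := x
  simp only [SetR, Finset.mem_erase, Finset.mem_product, Finset.HasAntidiagonal.mem_antidiagonal, Prod.mk.injEq,
    ne_eq] at h
  simp only []
  omega

lemma measB_sumcall_A {p q x1 y1 : ℕ} (hp : 2 ≤ p) (h1 : x1 ≤ p-2) (hy : y1 ≤ q)
    (hne : ¬(x1 = p-2 ∧ y1 = q)) : meas true (x1+1) y1 < meas false p q := by
  have h := meas_lt_sq (t := true) (p := x1+1) (q := y1) (s := p+q) (by simp only [cond]; omega)
  have e : 8*(p+q)*(p+q) = 8*(p+q+cond false 1 0)*(p+q+cond false 1 0) := by norm_num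
  rw [e] at h
  exact lt_of_lt_of_le h (meas_ge _ _ _)

lemma measA_sumcall_A {p q x2 y2 : ℕ} (hp : 2 ≤ p) (h1 : x2 ≤ p-2) (hy : y2 ≤ q) :
    meas false (x2+1) y2 < meas false p q := by
  have h := meas_lt_sq (t := false) (p := x2+1) (q := y2) (s := p+q) (by simp only [cond]; omega)
  have e : 8*(p+q)*(p+q) = 8*(p+q+cond false 1 0)*(p+q+cond false 1 0) := by norm_num
  rw [e] at h
  exact lt_of_lt_of_le h (meas_ge _ _ _)

lemma measB_sumcall_B {p q x1 y1 : ℕ} (hq : 1 ≤ q) (hqp : q < p) (h1 : x1 ≤ q-1) (hy : y1 ≤ p)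
    (hne : ¬(x1 = q-1 ∧ y1 = p)) : meas true (x1+1) y1 < meas true p q := by
  have h := meas_lt_sq (t := true) (p := x1+1) (q := y1) (s := p+q+1) (by simp only [cond]; omega)
  have e : 8*(p+q+1)*(p+q+1) = 8*(p+q+cond true 1 0)*(p+q+cond true 1 0) := by norm_num
  rw [e] at h
  exact lt_of_lt_of_le h (meas_ge _ _ _)

lemma measA_sumcall_B {p q x2 y2 : ℕ} (hq : 1 ≤ q) (hqp : q < p) (h1 : x2 ≤ q-1) (hy : y2 ≤ p) :
    meas false (x2+1) y2 < meas true p q := by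
  have h := meas_lt_sq (t := false) (p := x2+1) (q := y2) (s := p+q+1) (by simp only [cond]; omega)
  have e : 8*(p+q+1)*(p+q+1) = 8*(p+q+cond true 1 0)*(p+q+cond true 1 0) := by norm_num
  rw [e] at h
  exact lt_of_lt_of_le h (meas_ge _ _ _)

lemma measB_direct_lt {p q : ℕ} (hq : q < p) (h2 : 2 ≤ p + q) :
    meas true (p-1) q < meas false p q :=
  meas_lt_same_stage (by simp only [cond]; omega)
    (by unfold gap; simp only [cond]; split_ifs <;> omega)

lemma measA_swap_lt {p q : ℕ} (hpq : p < q) : meas false q p < meas false p q :=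
  meas_lt_same_stage (by simp only [cond]; omega)
    (by unfold gap; simp only [cond]; split_ifs <;> omega)

lemma measB_swap_lt {p q : ℕ} (hpq : p < q) : meas true q p < meas true p q :=
  meas_lt_same_stage (by simp only [cond]; omega)
    (by unfold gap; simp only [cond]; split_ifs <;> omega)

lemma measA_fromB_lt {p q : ℕ} (hq : q < p) (h1 : 1 ≤ q) :
    meas false (q+1) p < meas true p q :=
  meas_lt_same_stage (by simp only [cond]; omega)
    (by unfold gap; simp only [cond]; split_ifs <;> omega)

/-! ### The recursive definition of the coefficients -/

noncomputable def C (gc : ℕ → ℕ → ℂ) (α β : ℕ → ℝ) : Bool → ℕ → ℕ → ℂ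
  | false, p, q =>
    if h0 : p + q = 0 then 0
    else if h1 : p + q = 1 then 1
    else if hd : p = q then (α p : ℂ)
    else if hqp : q < p then
      (gc (p-2) q
        + 2 * (∑ x ∈ (SetR (p-2) q).attach,
            ((x.1.1.1:ℂ)+1) * C gc α β true (x.1.1.1+1) x.1.2.1
              * (((x.1.1.2:ℂ)+1) * C gc α β false (x.1.1.2+1) x.1.2.2))
        + 2*((p:ℂ)-1) * C gc α β true (p-1) q) / (((p:ℂ)-1)*(p:ℂ))
    else starRingEnd ℂ (C gc α β false q p)
  | true, p, q =>
    if h0 : p = 0 ∨ q = 0 then 0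
    else if hd : p = q then (β p : ℂ)
    else if hqp : q < p then
      starRingEnd ℂ (((q:ℂ)*((q:ℂ)+1) * C gc α β false (q+1) p
        - (gc (q-1) p + 2 * (∑ x ∈ (SetR (q-1) p).attach,
            ((x.1.1.1:ℂ)+1) * C gc α β true (x.1.1.1+1) x.1.2.1
              * (((x.1.1.2:ℂ)+1) * C gc α β false (x.1.1.2+1) x.1.2.2)))) / (2*(q:ℂ)))
    else starRingEnd ℂ (C gc α β true q p)
termination_by t p q => meas t p q
decreasing_by
  · have hx := mem_SetR x.2
    exact measB_sumcall_A (by omega) (by omega) (by omega) (by omega)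
  · have hx := mem_SetR x.2
    exact measA_sumcall_A (by omega) (by omega) (by omega)
  · exact measB_direct_lt hqp (by omega)
  · exact measA_swap_lt (by omega)
  · exact measA_fromB_lt hqp (by omega)
  · have hx := mem_SetR x.2
    exact measB_sumcall_B (by omega) hqp (by omega) (by omega) (by omega)
  · have hx := mem_SetR x.2
    exact measA_sumcall_B (by omega) hqp (by omega) (by omega)
  · exact measB_swap_lt (by omega)

/-! ### The quadratic sum -/

def Ssum (A B : ℕ → ℕ → ℂ) (j k : ℕ) : ℂ :=
  ∑ x ∈ SetR j k,
    ((x.1.1:ℂ)+1) * B (x.1.1+1) x.2.1 * (((x.1.2:ℂ)+1) * A (x.1.2+1) x.2.2)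

variable (gc : ℕ → ℕ → ℂ) (α β : ℕ → ℝ)

lemma C_A_00 : C gc α β false 0 0 = 0 := by
  conv_lhs => rw [C]
  rw [dif_pos rfl]
lemma C_A_sum1 {p q : ℕ} (h : p + q = 1) : C gc α β false p q = 1 := by
  conv_lhs => rw [C]
  rw [dif_neg (show ¬(p+q=0) by omega), dif_pos h]
lemma C_A_diag {p : ℕ} (h : 1 ≤ p) : C gc α β false p p = (α p : ℂ) := by
  conv_lhs => rw [C]
  rw [dif_neg (show ¬(p+p=0) by omega), dif_neg (show ¬(p+p=1) by omega), dif_pos rfl]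
lemma C_A_main {p q : ℕ} (h2 : 2 ≤ p + q) (hqp : q < p) :
    C gc α β false p q =
      (gc (p-2) q + 2 * Ssum (C gc α β false) (C gc α β true) (p-2) q
        + 2*((p:ℂ)-1) * C gc α β true (p-1) q) / (((p:ℂ)-1)*(p:ℂ)) := by
  conv_lhs => rw [C]
  rw [dif_neg (show ¬(p+q=0) by omega), dif_neg (show ¬(p+q=1) by omega),
    dif_neg (show ¬(p=q) by omega), dif_pos hqp]
  congr 2
  rw [Ssum, ← Finset.sum_attach (SetR (p-2) q)]
lemma C_A_swap {p q : ℕ} (h2 : 2 ≤ p + q) (hpq : p < q) :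
    C gc α β false p q = starRingEnd ℂ (C gc α β false q p) := by
  conv_lhs => rw [C]
  rw [dif_neg (show ¬(p+q=0) by omega), dif_neg (show ¬(p+q=1) by omega),
    dif_neg (show ¬(p=q) by omega), dif_neg (show ¬(q<p) by omega)]
lemma C_B_zero {p q : ℕ} (h : p = 0 ∨ q = 0) : C gc α β true p q = 0 := by
  conv_lhs => rw [C]
  rw [dif_pos h]
lemma C_B_diag {p : ℕ} (h : 1 ≤ p) : C gc α β true p p = (β p : ℂ) := by
  conv_lhs => rw [C]
  rw [dif_neg (show ¬(p = 0 ∨ p = 0) by omega), dif_pos rfl]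
lemma C_B_main {p q : ℕ} (hq : 1 ≤ q) (hqp : q < p) :
    C gc α β true p q =
      starRingEnd ℂ (((q:ℂ)*((q:ℂ)+1) * C gc α β false (q+1) p
        - (gc (q-1) p + 2 * Ssum (C gc α β false) (C gc α β true) (q-1) p)) / (2*(q:ℂ))) := by
  conv_lhs => rw [C]
  rw [dif_neg (show ¬(p = 0 ∨ q = 0) by omega), dif_neg (show ¬(p=q) by omega), dif_pos hqp]
  congr 4
  rw [Ssum, ← Finset.sum_attach (SetR (q-1) p)]
lemma C_B_swap {p q : ℕ} (hp : 1 ≤ p) (hpq : p < q) :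
    C gc α β true p q = starRingEnd ℂ (C gc α β true q p) := by
  conv_lhs => rw [C]
  rw [dif_neg (show ¬(p = 0 ∨ q = 0) by omega), dif_neg (show ¬(p=q) by omega),
    dif_neg (show ¬(q<p) by omega)]

lemma C_A_real (j k : ℕ) : C gc α β false j k = starRingEnd ℂ (C gc α β false k j) := by
  rcases lt_trichotomy j k with h|h|h
  · by_cases h2 : 2 ≤ j + k
    · exact C_A_swap gc α β h2 h
    · have hj : j = 0 ∧ k = 1 := by omega
      obtain ⟨rfl, rfl⟩ := hj
      rw [C_A_sum1 gc α β (by norm_num), C_A_sum1 gc α β (by norm_num)]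
      simp
  · subst h
    rcases Nat.eq_zero_or_pos j with rfl|hj
    · rw [C_A_00]; simp
    · rw [C_A_diag gc α β hj, Complex.conj_ofReal]
  · by_cases h2 : 2 ≤ j + k
    · rw [C_A_swap gc α β (by omega) h, Complex.conj_conj]
    · have hj : j = 1 ∧ k = 0 := by omega
      obtain ⟨rfl, rfl⟩ := hj
      rw [C_A_sum1 gc α β (by norm_num), C_A_sum1 gc α β (by norm_num)]
      simp

lemma C_B_real (j k : ℕ) : C gc α β true j k = starRingEnd ℂ (C gc α β true k j) := by
  rcases lt_trichotomy j k with h|h|h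
  · rcases Nat.eq_zero_or_pos j with rfl|hj
    · rw [C_B_zero gc α β (Or.inl rfl), C_B_zero gc α β (Or.inr rfl)]; simp
    · exact C_B_swap gc α β hj h
  · subst h
    rcases Nat.eq_zero_or_pos j with rfl|hj
    · rw [C_B_zero gc α β (Or.inl rfl)]; simp
    · rw [C_B_diag gc α β hj, Complex.conj_ofReal]
  · rcases Nat.eq_zero_or_pos k with rfl|hk
    · rw [C_B_zero gc α β (Or.inr rfl), C_B_zero gc α β (Or.inl rfl)]; simp
    · rw [C_B_swap gc α β hk h, Complex.conj_conj]

lemma E_holds (p q : ℕ) (hp : 2 ≤ p) :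
    ((p:ℂ)-1)*(p:ℂ) * C gc α β false p q - 2*((p:ℂ)-1) * C gc α β true (p-1) q
      = gc (p-2) q + 2 * Ssum (C gc α β false) (C gc α β true) (p-2) q := by
  have hp0 : (p:ℂ) ≠ 0 := Nat.cast_ne_zero.mpr (by omega)
  have hp1 : (p:ℂ) - 1 ≠ 0 := by
    have h1 : ((p:ℂ)) ≠ 1 := by exact_mod_cast (show p ≠ 1 by omega)
    intro hc
    exact h1 (sub_eq_zero.mp hc)
  rcases Nat.lt_or_ge q p with h|h
  · rw [C_A_main gc α β (by omega) h]
    field_simp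
    try ring
  · -- p ≤ q
    rw [C_B_swap gc α β (show 1 ≤ p - 1 by omega) (show p - 1 < q by omega)]
    rw [C_B_main gc α β (p := q) (q := p-1) (by omega) (by omega), Complex.conj_conj]
    have e1 : p - 1 + 1 = p := by omega
    have e2 : p - 1 - 1 = p - 2 := by omega
    have e3 : ((p - 1 : ℕ) : ℂ) = (p:ℂ) - 1 := by
      push_cast [Nat.cast_sub (show 1 ≤ p by omega)]; ring
    rw [e1, e2, e3]
    have e4 : (p:ℂ) - 1 + 1 = (p:ℂ) := by ring
    rw [e4]
    field_simp
    try ring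

lemma Ssum_congr {A A' B B' : ℕ → ℕ → ℂ} {j k : ℕ}
    (hB : ∀ x ∈ SetR j k, B' (x.1.1+1) x.2.1 = B (x.1.1+1) x.2.1)
    (hA : ∀ x ∈ SetR j k, A' (x.1.2+1) x.2.2 = A (x.1.2+1) x.2.2) :
    Ssum A' B' j k = Ssum A B j k :=
  Finset.sum_congr rfl fun x hx => by rw [hB x hx, hA x hx]

lemma coeff_PDE (F Φ : MvPowerSeries (Fin 2) ℂ) (hF10 : cf F 1 0 = 1) (j k : ℕ) :
    cf (Dz (Dz F) - 2 * Dz Φ * Dz F) j k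
      = ((j:ℂ)+1)*(((j:ℂ)+2) * cf F (j+2) k)
        - 2*(((j:ℂ)+1) * cf Φ (j+1) k + Ssum (cf F) (cf Φ) j k) := by
  rw [cf_sub, cf_Dz, cf_Dz, mul_assoc, cf_two_mul, cf_mul]
  have hsc : ∀ x ∈ antidiagonal j ×ˢ antidiagonal k,
      cf (Dz Φ) x.1.1 x.2.1 * cf (Dz F) x.1.2 x.2.2
        = ((x.1.1:ℂ)+1) * cf Φ (x.1.1+1) x.2.1 * (((x.1.2:ℂ)+1) * cf F (x.1.2+1) x.2.2) :=
    fun x _ => by rw [cf_Dz, cf_Dz]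
  rw [Finset.sum_congr rfl hsc]
  have htop : ((j,0),(k,0)) ∈ antidiagonal j ×ˢ antidiagonal k := by simp
  rw [← Finset.add_sum_erase _ _ htop]
  have hS : ∑ x ∈ ((antidiagonal j ×ˢ antidiagonal k).erase ((j,0),(k,0))),
      ((x.1.1:ℂ)+1) * cf Φ (x.1.1+1) x.2.1 * (((x.1.2:ℂ)+1) * cf F (x.1.2+1) x.2.2)
        = Ssum (cf F) (cf Φ) j k := rfl
  rw [hS]
  simp only [Nat.cast_zero, hF10]
  push_cast
  ring

/-! ### The solution power series -/

def Fs : MvPowerSeries (Fin 2) ℂ := fun d => C gc α β false (d 0) (d 1)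
def Φs : MvPowerSeries (Fin 2) ℂ := fun d => C gc α β true (d 0) (d 1)

lemma cf_Fs : cf (Fs gc α β) = C gc α β false := by
  funext j k
  rw [cf_apply]
  show C gc α β false (sgl j k 0) (sgl j k 1) = _
  rw [sgl_apply0, sgl_apply1]

lemma cf_Φs : cf (Φs gc α β) = C gc α β true := by
  funext j k
  rw [cf_apply]
  show C gc α β true (sgl j k 0) (sgl j k 1) = _
  rw [sgl_apply0, sgl_apply1]

lemma cast_ne_helper {p : ℕ} (hp : 2 ≤ p) : ((p:ℂ)-1)*(p:ℂ) ≠ 0 := by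
  have hp0 : (p:ℂ) ≠ 0 := Nat.cast_ne_zero.mpr (by omega)
  have hp1 : (p:ℂ) - 1 ≠ 0 := by
    have h1 : ((p:ℂ)) ≠ 1 := by exact_mod_cast (show p ≠ 1 by omega)
    intro hc
    exact h1 (sub_eq_zero.mp hc)
  exact mul_ne_zero hp1 hp0

lemma PDE_Fs (G : MvPowerSeries (Fin 2) ℂ) :
    Dz (Dz (Fs (cf G) α β)) - 2 * Dz (Φs (cf G) α β) * Dz (Fs (cf G) α β) = G := by
  apply cf_ext
  intro j k
  rw [coeff_PDE _ _ (by rw [cf_Fs]; exact C_A_sum1 (cf G) α β rfl)]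
  rw [cf_Fs, cf_Φs]
  have hE := E_holds (cf G) α β (j+2) k (by omega)
  have e1 : j + 2 - 2 = j := by omega
  have e2 : j + 2 - 1 = j + 1 := by omega
  rw [e1, e2] at hE
  have e3 : ((j+2:ℕ):ℂ) = (j:ℂ) + 2 := by push_cast; ring
  rw [e3] at hE
  linear_combination hE

/-! ### Uniqueness -/

lemma uniq_key (F' Φ' : MvPowerSeries (Fin 2) ℂ)
    (hGF : ∀ j k : ℕ, ((j:ℂ)+1)*(((j:ℂ)+2) * cf F' (j+2) k)
        - 2*(((j:ℂ)+1) * cf Φ' (j+1) k + Ssum (cf F') (cf Φ') j k) = gc j k)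
    (hrealF : ∀ j k, cf F' j k = starRingEnd ℂ (cf F' k j))
    (hrealΦ : ∀ j k, cf Φ' j k = starRingEnd ℂ (cf Φ' k j))
    (h00 : cf F' 0 0 = 0) (h10 : cf F' 1 0 = 1) (h01 : cf F' 0 1 = 1)
    (hΦax : ∀ k, cf Φ' k 0 = 0 ∧ cf Φ' 0 k = 0)
    (hdiagF : ∀ n, 1 ≤ n → cf F' n n = (α n : ℂ))
    (hdiagΦ : ∀ n, 1 ≤ n → cf Φ' n n = (β n : ℂ)) :
    ∀ N t p q, meas t p q < N → (cond t (cf Φ') (cf F')) p q = C gc α β t p q := by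
  intro N
  induction N using Nat.strong_induction_on with
  | _ N IH =>
  intro t p q hm
  cases t
  · -- the series f
    simp only [cond]
    by_cases h0 : p + q = 0
    · obtain ⟨rfl, rfl⟩ : p = 0 ∧ q = 0 := by omega
      rw [h00, C_A_00]
    by_cases h1 : p + q = 1
    · rcases (show (p = 1 ∧ q = 0) ∨ (p = 0 ∧ q = 1) by omega) with ⟨rfl,rfl⟩|⟨rfl,rfl⟩
      · rw [h10, C_A_sum1 gc α β rfl]
      · rw [h01, C_A_sum1 gc α β rfl]
    by_cases hd : p = q
    · subst hd
      rw [hdiagF p (by omega), C_A_diag gc α β (by omega)]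
    by_cases hqp : q < p
    · have hp2 : 2 ≤ p := by omega
      have hE := hGF (p-2) q
      have e1 : p - 2 + 2 = p := by omega
      have e2 : p - 2 + 1 = p - 1 := by omega
      rw [e1, e2] at hE
      have e3 : ((p-2:ℕ):ℂ) = (p:ℂ) - 2 := by
        rw [Nat.cast_sub hp2]; norm_num
      rw [e3] at hE
      have hB := IH (meas false p q) hm true (p-1) q (measB_direct_lt hqp (by omega))
      simp only [cond] at hB
      have hS : Ssum (cf F') (cf Φ') (p-2) q
          = Ssum (C gc α β false) (C gc α β true) (p-2) q := by
        refine Ssum_congr ?_ ?_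
        · intro x hx
          have hmem := mem_SetR hx
          have := IH (meas false p q) hm true (x.1.1+1) x.2.1
            (measB_sumcall_A hp2 (by omega) (by omega) (by omega))
          simpa using this
        · intro x hx
          have hmem := mem_SetR hx
          have := IH (meas false p q) hm false (x.1.2+1) x.2.2
            (measA_sumcall_A hp2 (by omega) (by omega))
          simpa using this
      rw [hB, hS] at hE
      rw [C_A_main gc α β (by omega) hqp]
      rw [eq_div_iff (cast_ne_helper hp2)]
      linear_combination hE
    · have hq : p < q := by omega
      rw [hrealF p q]
      have hF := IH (meas false p q) hm false q p (measA_swap_lt hq)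
      simp only [cond] at hF
      rw [hF, ← C_A_swap gc α β (by omega) hq]
  · -- the series φ
    simp only [cond]
    by_cases h0 : p = 0 ∨ q = 0
    · rw [C_B_zero gc α β h0]
      rcases h0 with rfl|rfl
      · exact (hΦax q).2
      · exact (hΦax p).1
    by_cases hd : p = q
    · subst hd
      rw [hdiagΦ p (by omega), C_B_diag gc α β (by omega)]
    by_cases hqp : q < p
    · have hq1 : 1 ≤ q := by omega
      rw [hrealΦ p q]
      have hE := hGF (q-1) p
      have e1 : q - 1 + 2 = q + 1 := by omega
      have e2 : q - 1 + 1 = q := by omega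
      rw [e1, e2] at hE
      have e3 : ((q-1:ℕ):ℂ) = (q:ℂ) - 1 := by
        rw [Nat.cast_sub hq1]; norm_num
      rw [e3] at hE
      have hA := IH (meas true p q) hm false (q+1) p (measA_fromB_lt hqp hq1)
      simp only [cond] at hA
      have hS : Ssum (cf F') (cf Φ') (q-1) p
          = Ssum (C gc α β false) (C gc α β true) (q-1) p := by
        refine Ssum_congr ?_ ?_
        · intro x hx
          have hmem := mem_SetR hx
          have := IH (meas true p q) hm true (x.1.1+1) x.2.1
            (measB_sumcall_B hq1 hqp (by omega) (by omega) (by omega))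
          simpa using this
        · intro x hx
          have hmem := mem_SetR hx
          have := IH (meas true p q) hm false (x.1.2+1) x.2.2
            (measA_sumcall_B hq1 hqp (by omega) (by omega))
          simpa using this
      rw [hA, hS] at hE
      rw [C_B_main gc α β hq1 hqp]
      congr 1
      have h2q : (2:ℂ)*(q:ℂ) ≠ 0 := by
        have : (q:ℂ) ≠ 0 := Nat.cast_ne_zero.mpr (by omega)
        simpa using this
      rw [eq_div_iff h2q]
      linear_combination -hE
    · have hq : p < q := by omega
      rw [hrealΦ p q]
      have hΦ := IH (meas true p q) hm true q p (measB_swap_lt hq)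
      simp only [cond] at hΦ
      rw [hΦ, ← C_B_swap gc α β (by omega) hq]

end Stmt5

/-- given `g ∈ ℂ[[z,w]]` and real sequences `(α_n)_{n≥1}`,
`(β_n)_{n≥1}`, there is a *unique* pair of real formal power series `(f, φ)`
with `f = z + w + O(deg ≥ 2)`, `φ = O(deg ≥ 2)`, `φ` free of harmonic terms
(no pure `z^k` or `w^k` terms), the coefficient of `(zw)^n` in `f` (resp. `φ`)
equal to `α_n` (resp. `β_n`) for all `n ≥ 1`, and `D²f − 2(Dφ)(Df) = g`. -/
theorem stmt5 (g : MvPowerSeries (Fin 2) ℂ) (α β : ℕ → ℝ) :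
    ∃! p : MvPowerSeries (Fin 2) ℂ × MvPowerSeries (Fin 2) ℂ,
      IsRealSeries p.1 ∧ IsRealSeries p.2 ∧
      MvPowerSeries.coeff (R := ℂ) 0 p.1 = 0 ∧
      MvPowerSeries.coeff (R := ℂ) (Finsupp.single 0 1) p.1 = 1 ∧
      MvPowerSeries.coeff (R := ℂ) (Finsupp.single 1 1) p.1 = 1 ∧
      (∀ d : Fin 2 →₀ ℕ, d 0 + d 1 ≤ 1 → MvPowerSeries.coeff (R := ℂ) d p.2 = 0) ∧
      (∀ k : ℕ, MvPowerSeries.coeff (R := ℂ) (Finsupp.single 0 k) p.2 = 0 ∧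
        MvPowerSeries.coeff (R := ℂ) (Finsupp.single 1 k) p.2 = 0) ∧
      (∀ n : ℕ, 1 ≤ n →
        MvPowerSeries.coeff (R := ℂ) (Finsupp.single 0 n + Finsupp.single 1 n) p.1
            = (α n : ℂ) ∧
        MvPowerSeries.coeff (R := ℂ) (Finsupp.single 0 n + Finsupp.single 1 n) p.2
            = (β n : ℂ)) ∧
      Dz (Dz p.1) - 2 * Dz p.2 * Dz p.1 = g := by
  open Stmt5 in
  refine ⟨(Stmt5.Fs (Stmt5.cf g) α β, Stmt5.Φs (Stmt5.cf g) α β),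
    ⟨?_, ?_, ?_, ?_, ?_, ?_, ?_, ?_, ?_⟩, ?_⟩
  · intro j k
    show cf (Fs (cf g) α β) j k = starRingEnd ℂ (cf (Fs (cf g) α β) k j)
    rw [cf_Fs]
    exact C_A_real _ _ _ j k
  · intro j k
    show cf (Φs (cf g) α β) j k = starRingEnd ℂ (cf (Φs (cf g) α β) k j)
    rw [cf_Φs]
    exact C_B_real _ _ _ j k
  · rw [show (0 : Fin 2 →₀ ℕ) = sgl 0 0 from sgl00.symm]
    show cf (Fs (cf g) α β) 0 0 = 0
    rw [cf_Fs]
    exact C_A_00 _ _ _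
  · rw [show (Finsupp.single 0 1 : Fin 2 →₀ ℕ) = sgl 1 0 from (sgl_left 1).symm]
    show cf (Fs (cf g) α β) 1 0 = 1
    rw [cf_Fs]
    exact C_A_sum1 _ _ _ rfl
  · rw [show (Finsupp.single 1 1 : Fin 2 →₀ ℕ) = sgl 0 1 from (sgl_right 1).symm]
    show cf (Fs (cf g) α β) 0 1 = 1
    rw [cf_Fs]
    exact C_A_sum1 _ _ _ rfl
  · intro d hd
    rw [eq_sgl d]
    show cf (Φs (cf g) α β) (d 0) (d 1) = 0
    rw [cf_Φs]
    exact C_B_zero _ _ _ (by omega)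
  · intro k
    constructor
    · rw [show (Finsupp.single 0 k : Fin 2 →₀ ℕ) = sgl k 0 from (sgl_left k).symm]
      show cf (Φs (cf g) α β) k 0 = 0
      rw [cf_Φs]
      exact C_B_zero _ _ _ (Or.inr rfl)
    · rw [show (Finsupp.single 1 k : Fin 2 →₀ ℕ) = sgl 0 k from (sgl_right k).symm]
      show cf (Φs (cf g) α β) 0 k = 0
      rw [cf_Φs]
      exact C_B_zero _ _ _ (Or.inl rfl)
  · intro n hn
    constructor
    · show cf (Fs (cf g) α β) n n = (α n : ℂ)
      rw [cf_Fs]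
      exact C_A_diag _ _ _ hn
    · show cf (Φs (cf g) α β) n n = (β n : ℂ)
      rw [cf_Φs]
      exact C_B_diag _ _ _ hn
  · exact PDE_Fs α β g
  · rintro ⟨F', Φ'⟩ ⟨hr1, hr2, h00, h10, h01, hlow, hharm, hdiag, hPDE⟩
    have h10' : cf F' 1 0 = 1 := by
      show MvPowerSeries.coeff (R := ℂ) (sgl 1 0) F' = 1
      rw [sgl_left]
      exact h10
    have hGF : ∀ j k : ℕ, ((j:ℂ)+1)*(((j:ℂ)+2) * cf F' (j+2) k)
        - 2*(((j:ℂ)+1) * cf Φ' (j+1) k + Ssum (cf F') (cf Φ') j k) = cf g j k := by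
      intro j k
      have h := congrArg (fun X => cf X j k) hPDE
      simp only at h
      rw [coeff_PDE F' Φ' h10' j k] at h
      exact h
    have h00' : cf F' 0 0 = 0 := by
      show MvPowerSeries.coeff (R := ℂ) (sgl 0 0) F' = 0
      rw [sgl00]
      exact h00
    have h01' : cf F' 0 1 = 1 := by
      show MvPowerSeries.coeff (R := ℂ) (sgl 0 1) F' = 1
      rw [sgl_right]
      exact h01
    have hΦax : ∀ k, cf Φ' k 0 = 0 ∧ cf Φ' 0 k = 0 := by
      intro k
      constructor
      · show MvPowerSeries.coeff (R := ℂ) (sgl k 0) Φ' = 0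
        rw [sgl_left]
        exact (hharm k).1
      · show MvPowerSeries.coeff (R := ℂ) (sgl 0 k) Φ' = 0
        rw [sgl_right]
        exact (hharm k).2
    have key := uniq_key (cf g) α β F' Φ' hGF (fun j k => hr1 j k) (fun j k => hr2 j k)
      h00' h10' h01' hΦax (fun n hn => (hdiag n hn).1) (fun n hn => (hdiag n hn).2)
    have e1 : F' = Fs (cf g) α β := by
      apply cf_ext
      intro j k
      have h := key (meas false j k + 1) false j k (Nat.lt_succ_self _)
      simp only [cond] at h
      rw [h, cf_Fs]
    have e2 : Φ' = Φs (cf g) α β := by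
      apply cf_ext
      intro j k
      have h := key (meas true j k + 1) true j k (Nat.lt_succ_self _)
      simp only [cond] at h
      rw [h, cf_Φs]
    exact Prod.ext e1 e2
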